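/- Let N, k, m be integers with k ≥ 1, m ≥ 2 and 2k ≤ N, and let λ be a partition with λ₁ ≤ m and at most k nonzero parts (i.e. λ ⊆ (m^k)). Let q₀, t₀ be nonzero complex numbers, neither of which is a root of unity, satisfying q₀^{m−1} t₀^{N−k+1} = 1 and, for every common divisor e > 1 of m−1 and N−k+1, q₀^{(m−1)/e} t₀^{(N−k+1)/e} ≠ 1. Then Π_{(i,j)∈λ} (1 − q₀^{λ_i − j} t₀^{λ'_j − i + 1}) ≠ 0. (This product is the hook normalization constant c_λ(q,t) = h_{q,t}(λ, t) of the integral form J_λ of the Macdonald polynomial, so the symmetric Macdonald polynomial P_λ has no pole at such parameter values.) -/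

import Mathlib

/-! Every factor is `1 - q₀^a t₀^b` with `1 ≤ b ≤ k < N - k + 1`, because the leg plus one of a cell
of a partition with at most `k` parts lies in `[1, k]`. Since `q₀` has infinite order, a relation
`q₀^a t₀^b = 1` together with `q₀^(m-1) t₀^(N-k+1) = 1` forces `a (N-k+1) = (m-1) b`, so both
exponent vectors are multiples `s • v` and `g • v` of one vector `v = (M', P')`, with `0 < s < g`.
The order of `z = q₀^M' t₀^P'` then divides `s` and `g`, hence `g = d e` with `e > 1` and
`z^d = 1`, which is the relation excluded by the minimality hypothesis for the divisor `e`. -/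

open Finset

/-- The conjugate partition: `λ'_j = #{i : λ_i ≥ j}`. -/
def conjPart {k : ℕ} (lam : Fin k → ℕ) (j : ℕ) : ℕ :=
  (univ.filter fun i : Fin k => j ≤ lam i).card

theorem Nat.exists_common_factor_of_mul_eq_mul {a b M P : ℕ} (h : a * P = M * b) (hP : 0 < P) :
    ∃ M' P' g s, M = M' * g ∧ P = P' * g ∧ a = M' * s ∧ b = P' * s := by
  obtain ⟨g, M', P', hg, hcop, rfl, rfl⟩ := Nat.exists_coprime' (Nat.gcd_pos_of_pos_right M hP)
  have hP' : 0 < P' := Nat.pos_of_mul_pos_right hP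
  have h' : a * P' = M' * b := Nat.eq_of_mul_eq_mul_right hg (by linarith)
  obtain ⟨s, rfl⟩ : P' ∣ b := hcop.symm.dvd_of_dvd_mul_left ⟨a, by rw [← h', mul_comm]⟩
  exact ⟨M', P', g, s, rfl, rfl, Nat.eq_of_mul_eq_mul_right hP' (by linarith), rfl⟩

section CancelCommMonoid

variable {G : Type*} [CancelCommMonoid G] {q t : G}

theorem mul_eq_mul_of_pow_mul_pow_eq_one (hq : ¬IsOfFinOrder q) {a b M P : ℕ}
    (h : q ^ a * t ^ b = 1) (h' : q ^ M * t ^ P = 1) : a * P = M * b := by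
  refine injective_pow_iff_not_isOfFinOrder.mpr hq (mul_right_cancel (b := t ^ (b * P)) ?_)
  calc q ^ (a * P) * t ^ (b * P) = (q ^ a * t ^ b) ^ P := by rw [mul_pow, pow_mul, pow_mul]
    _ = (q ^ M * t ^ P) ^ b := by rw [h, h', one_pow, one_pow]
    _ = q ^ (M * b) * t ^ (b * P) := by rw [mul_pow, ← pow_mul, ← pow_mul, mul_comm P b]

theorem pow_mul_pow_ne_one_of_lt (hq : ¬IsOfFinOrder q) {M P : ℕ} (hrel : q ^ M * t ^ P = 1)
    (hmin : ∀ e : ℕ, 1 < e → e ∣ M → e ∣ P → q ^ (M / e) * t ^ (P / e) ≠ 1)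
    {a b : ℕ} (hb : 0 < b) (hbP : b < P) : q ^ a * t ^ b ≠ 1 := by
  intro h
  obtain ⟨M', P', g, s, rfl, rfl, rfl, rfl⟩ :=
    Nat.exists_common_factor_of_mul_eq_mul (mul_eq_mul_of_pow_mul_pow_eq_one hq h hrel)
      (hb.trans hbP)
  have hpow (n : ℕ) : (q ^ M' * t ^ P') ^ n = q ^ (M' * n) * t ^ (P' * n) := by
    rw [mul_pow, ← pow_mul, ← pow_mul]
  have hs : 0 < s := Nat.pos_of_mul_pos_left hb
  have hsg : s < g := Nat.lt_of_mul_lt_mul_left hbP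
  obtain ⟨e, he⟩ := orderOf_dvd_of_pow_eq_one ((hpow g).trans hrel)
  set d := orderOf (q ^ M' * t ^ P')
  have hds : d ≤ s := Nat.le_of_dvd hs (orderOf_dvd_of_pow_eq_one ((hpow s).trans h))
  have he1 : 1 < e := by
    by_contra! he1
    interval_cases e <;> omega
  have hM : M' * g = e * (M' * d) := by rw [he]; ring
  have hP : P' * g = e * (P' * d) := by rw [he]; ring
  refine hmin e he1 (hM ▸ dvd_mul_right _ _) (hP ▸ dvd_mul_right _ _) ?_
  rw [hM, hP, Nat.mul_div_cancel_left _ (by omega), Nat.mul_div_cancel_left _ (by omega), ← hpow,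
    pow_orderOf_eq_one]

end CancelCommMonoid

theorem lt_conjPart {k : ℕ} {lam : Fin k → ℕ} (hanti : Antitone lam) {i : Fin k} {j : ℕ}
    (hj : j ≤ lam i) : (i : ℕ) < conjPart lam j := by
  have : Iic i ⊆ univ.filter fun i' => j ≤ lam i' := fun i' hi' =>
    mem_filter.mpr ⟨mem_univ _, hj.trans (hanti (mem_Iic.mp hi'))⟩
  exact Nat.lt_iff_add_one_le.mpr ((Fin.card_Iic i).symm.trans_le (card_le_card this))

theorem conjPart_le {k : ℕ} (lam : Fin k → ℕ) (j : ℕ) : conjPart lam j ≤ k :=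
  (card_le_univ _).trans_eq (Fintype.card_fin k)

theorem Units.pow_mul_pow_eq_one_iff {M : Type*} [Monoid M] (u v : Mˣ) (a b : ℕ) :
    u ^ a * v ^ b = 1 ↔ (u : M) ^ a * (v : M) ^ b = 1 := by
  simp [Units.ext_iff]

theorem pow_mul_pow_ne_one_of_lt₀ {G₀ : Type*} [CommGroupWithZero G₀] {q t : G₀} (hq₀ : q ≠ 0)
    (ht₀ : t ≠ 0) (hq : ¬IsOfFinOrder q) {M P : ℕ} (hrel : q ^ M * t ^ P = 1)
    (hmin : ∀ e : ℕ, 1 < e → e ∣ M → e ∣ P → q ^ (M / e) * t ^ (P / e) ≠ 1)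
    {a b : ℕ} (hb : 0 < b) (hbP : b < P) : q ^ a * t ^ b ≠ 1 := by
  lift q to G₀ˣ using IsUnit.mk0 q hq₀
  lift t to G₀ˣ using IsUnit.mk0 t ht₀
  simp only [ne_eq, ← Units.pow_mul_pow_eq_one_iff] at hrel hmin ⊢
  exact pow_mul_pow_ne_one_of_lt (Units.isOfFinOrder_val.not.mp hq) hrel hmin hb hbP

theorem subrectangular_hook_product_nonzero_general
    (N k m : ℕ) (hkN : 2 * k ≤ N)
    (lam : Fin k → ℕ) (hanti : Antitone lam)
    (q₀ t₀ : ℂ) (hq₀ : q₀ ≠ 0) (ht₀ : t₀ ≠ 0)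
    (hqru : ∀ r : ℕ, 0 < r → q₀ ^ r ≠ 1)
    (hrel : q₀ ^ (m - 1) * t₀ ^ (N - k + 1) = 1)
    (hmin : ∀ e : ℕ, 1 < e → e ∣ (m - 1) → e ∣ (N - k + 1) →
      q₀ ^ ((m - 1) / e) * t₀ ^ ((N - k + 1) / e) ≠ 1) :
    ∏ i : Fin k, ∏ j ∈ Icc 1 (lam i),
      (1 - q₀ ^ (lam i - j) * t₀ ^ (conjPart lam j - (i : ℕ))) ≠ 0 := by
  have hq : ¬IsOfFinOrder q₀ := by
    rw [isOfFinOrder_iff_pow_eq_one]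
    exact fun ⟨r, hr, h⟩ => hqru r hr h
  refine prod_ne_zero_iff.mpr fun i _ => prod_ne_zero_iff.mpr fun j hj => ?_
  have hi := lt_conjPart hanti (mem_Icc.mp hj).2
  have hk := conjPart_le lam j
  exact sub_ne_zero.mpr (pow_mul_pow_ne_one_of_lt₀ hq₀ ht₀ hq hrel hmin (by omega) (by omega)).symm

/-- Let `k ≥ 1`, `m ≥ 2`, `2k ≤ N`, and let `λ ⊆ (m^k)` be a partition
(`λ₁ ≤ m`, at most `k` nonzero parts).  If `q₀, t₀` are nonzero complex numbers, neither
a root of unity, with `q₀^{m−1} t₀^{N−k+1} = 1` and no lower-order such relation, then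
`Π_{(i,j)∈λ} (1 − q₀^{λ_i−j} t₀^{λ'_j−i+1}) ≠ 0`, i.e. the hook normalization
`c_λ(q,t) = h_{q,t}(λ,t)` does not vanish at `(q₀,t₀)`. -/
theorem subrectangular_hook_product_nonzero
    (N k m : ℕ) (hk : 1 ≤ k) (hm : 2 ≤ m) (hkN : 2 * k ≤ N)
    (lam : Fin k → ℕ) (hanti : Antitone lam) (hsub : ∀ i, lam i ≤ m)
    (q₀ t₀ : ℂ) (hq₀ : q₀ ≠ 0) (ht₀ : t₀ ≠ 0)
    (hqru : ∀ r : ℕ, 0 < r → q₀ ^ r ≠ 1) (htru : ∀ r : ℕ, 0 < r → t₀ ^ r ≠ 1)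
    (hrel : q₀ ^ (m - 1) * t₀ ^ (N - k + 1) = 1)
    (hmin : ∀ e : ℕ, 1 < e → e ∣ (m - 1) → e ∣ (N - k + 1) →
      q₀ ^ ((m - 1) / e) * t₀ ^ ((N - k + 1) / e) ≠ 1) :
    ∏ i : Fin k, ∏ j ∈ Icc 1 (lam i),
      (1 - q₀ ^ (lam i - j) * t₀ ^ (conjPart lam j - (i : ℕ))) ≠ 0 :=
  subrectangular_hook_product_nonzero_general N k m hkN lam hanti q₀ t₀ hq₀ ht₀ hqru hrel hmin
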